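/- arXiv:2002.00368 — 4 statements merged into one kernel-verified Lean document; each statement's English description precedes it below -/
import Mathlib

section
/- Let F be a finite field and m ≥ 1. The lattice of subspaces of F^m is paraorthomodular: for all subspaces U, W of F^m, if U ⊆ W and U^⊥ ∩ W = {0}, then U = W. -/
/-- The dot product on `Fin m → F`. -/
def dot {F : Type} [Field F] {m : ℕ} (a b : Fin m → F) : F := ∑ i, a i * b i

/-- The orthogonal complement of a subspace of `Fin m → F` w.r.t. the dot product. -/
def perp {F : Type} [Field F] {m : ℕ} (U : Submodule F (Fin m → F)) :
    Submodule F (Fin m → F) where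
  carrier := {x | ∀ y ∈ U, dot x y = 0}
  add_mem' := by
    intro a b ha hb y hy
    simp only [Set.mem_setOf_eq, dot] at *
    simp [add_mul, Finset.sum_add_distrib, ha y hy, hb y hy]
  zero_mem' := by intro y hy; simp [dot]
  smul_mem' := by
    intro c a ha y hy
    simp only [Set.mem_setOf_eq, dot] at *
    simp [mul_assoc, ← Finset.mul_sum, ha y hy]

/-! Nondegeneracy of the dot product gives `dim U^⊥ = m - dim U`. As `U^⊥` and `W` meet only
in `0`, `dim U^⊥ + dim W ≤ m`, hence `dim W ≤ dim U`, and `U ≤ W` forces equality. -/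

namespace LinearMap.BilinForm

variable {K V : Type*} [Field K] [AddCommGroup V] [Module K V] [FiniteDimensional K V]

theorem eq_of_le_of_orthogonal_inf_eq_bot {B : LinearMap.BilinForm K V} (hB : B.Nondegenerate)
    {U W : Submodule K V} (hUW : U ≤ W) (h : B.orthogonal U ⊓ W = ⊥) : U = W := by
  refine Submodule.eq_of_le_of_finrank_le hUW ?_
  have hdisjoint := Submodule.finrank_add_finrank_le_of_disjoint (disjoint_iff.mpr h)
  rw [finrank_orthogonal hB] at hdisjoint
  have hU := U.finrank_le
  omega

end LinearMap.BilinForm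

theorem dotProductBilin_nondegenerate (R ι : Type*) [CommSemiring R] [Fintype ι] :
    (dotProductBilin R R : LinearMap.BilinForm R (ι → R)).Nondegenerate :=
  ⟨dotProduct_eq_zero,
    fun y hy => dotProduct_eq_zero y fun x => by rw [dotProduct_comm]; exact hy x⟩

theorem perp_eq_orthogonal_dotProductBilin {F : Type} [Field F] {m : ℕ}
    (U : Submodule F (Fin m → F)) :
    perp U = LinearMap.BilinForm.orthogonal (dotProductBilin F F) U := by
  ext x
  show (∀ y ∈ U, x ⬝ᵥ y = 0) ↔ ∀ y ∈ U, y ⬝ᵥ x = 0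
  exact forall₂_congr fun y _ => by rw [dotProduct_comm]

theorem paraorthomodular_general
    {F : Type} [Field F] {m : ℕ}
    (U W : Submodule F (Fin m → F)) (hUW : U ≤ W) (h : perp U ⊓ W = ⊥) :
    U = W := by
  rw [perp_eq_orthogonal_dotProductBilin] at h
  exact LinearMap.BilinForm.eq_of_le_of_orthogonal_inf_eq_bot
    (dotProductBilin_nondegenerate F (Fin m)) hUW h

/-- the lattice of subspaces of `F^m` is paraorthomodular. -/
theorem paraorthomodular
    {F : Type} [Field F] [Fintype F] {m : ℕ} (hm : 1 ≤ m)
    (U W : Submodule F (Fin m → F)) (hUW : U ≤ W) (h : perp U ⊓ W = ⊥) :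
    U = W :=
  paraorthomodular_general U W hUW h
end

section
/- Let F be a finite field and suppose F² = Fin 2 → F contains no isotropic vector. Then for every one-dimensional subspace U of F², the orthogonal complement U^⊥ is also one-dimensional and U^⊥ ≠ U. (Thus ⊥ is a fixed-point-free involution on the q+1 atoms of the subspace lattice of F², which is therefore isomorphic to MO_{(q+1)/2}.) -/
open Module in
/-- if `F²` has no isotropic vector then the orthocomplement of every
one-dimensional subspace is one-dimensional and differs from it. -/
theorem perp_of_atom_in_plane
    {F : Type} [Field F] [Fintype F]
    (hiso : ∀ a : Fin 2 → F, a ≠ 0 → dot a a ≠ 0)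
    (U : Submodule F (Fin 2 → F)) (hU : finrank F U = 1) :
    finrank F (perp U) = 1 ∧ perp U ≠ U := by
  obtain ⟨⟨v, hvU⟩, hv0, hspan⟩ := finrank_eq_one_iff'.mp hU
  have hv : v ≠ 0 := fun h => hv0 (Subtype.ext h)
  have hUeq : U = Submodule.span F {v} := by
    apply le_antisymm
    · intro w hw
      obtain ⟨c, hc⟩ := hspan ⟨w, hw⟩
      have hc' : c • v = w := congrArg Subtype.val hc
      exact hc' ▸ Submodule.smul_mem _ c (Submodule.mem_span_singleton_self v)
    · rw [Submodule.span_singleton_le_iff_mem]; exact hvU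
  let φ : (Fin 2 → F) →ₗ[F] F :=
    { toFun := fun x => dot x v
      map_add' := fun a b => by simp [dot, add_mul, Finset.sum_add_distrib]
      map_smul' := fun c a => by simp [dot, Fin.sum_univ_two]; ring }
  have hvmem : v ∈ U := hvU
  have hker : perp U = LinearMap.ker φ := by
    ext x
    constructor
    · intro hx
      exact hx v hvmem
    · intro hx y hy
      rw [hUeq, Submodule.mem_span_singleton] at hy
      obtain ⟨c, rfl⟩ := hy
      have h1 : ∑ i, x i * (c * v i) = c * ∑ i, x i * v i := by
        rw [Finset.mul_sum]; exact Finset.sum_congr rfl fun i _ => by ring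
      have hx' : dot x v = 0 := hx
      simp only [dot, Pi.smul_apply, smul_eq_mul, h1]
      simp [dot] at hx'
      simp [hx']
  have hφne : φ ≠ 0 := fun h => hiso v hv (by simpa [φ] using congrFun (congrArg DFunLike.coe h) v)
  have hsurj : Function.Surjective φ :=
    surjective_of_nonzero_of_finrank_eq_one (Module.finrank_self F) hφne
  have hrange : LinearMap.range φ = ⊤ := LinearMap.range_eq_top.mpr hsurj
  have hrn := LinearMap.finrank_range_add_finrank_ker φ
  rw [hrange, finrank_top, Module.finrank_self, Module.finrank_fin_fun] at hrn
  constructor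
  · rw [hker]; omega
  · intro h
    have hvp : v ∈ perp U := by rw [h]; exact hvmem
    have : dot v v = 0 := hvp v hvmem
    exact hiso v hv this
end

section
/- Let F be a finite field with q elements, m ≥ 0 and 0 ≤ d ≤ m. Define a_0 = 1 and a_n = ∏_{i=1}^{n}(q^i − 1). Then the number of d-dimensional subspaces of F^m equals a_m / (a_d · a_{m−d}); equivalently, (number of d-dimensional subspaces of F^m) · a_d · a_{m−d} = a_m. -/
/-!
Double counting of linearly independent `d`-tuples in an `n`-dimensional space `V` over a field
with `q` elements: such a tuple spans a unique `d`-dimensional subspace `U`, and it is then a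
linearly independent `d`-tuple of `U`. Hence (number of `d`-dimensional subspaces) times
`∏_{i<d} (q^d - q^i)` equals `∏_{i<d} (q^n - q^i)`. Pulling `q^i` out of each factor leaves
`∏_{i<d} (q^(d-i) - 1) = a_d` and `∏_{i<d} (q^(n-i) - 1) = a_n / a_(n-d)`.
-/

open Module Submodule Finset

theorem prod_range_pow_sub_pow (q n d : ℕ) (hd : d ≤ n) :
    ∏ i ∈ range d, (q ^ n - q ^ i) =
      q ^ (∑ i ∈ range d, i) * ∏ i ∈ range d, (q ^ (n - i) - 1) := by
  rw [← prod_pow_eq_pow_sum, ← prod_mul_distrib]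
  refine prod_congr rfl fun i hi => ?_
  rw [Nat.mul_sub, mul_one, ← pow_add, Nat.add_sub_cancel' (by grind)]

theorem prod_range_pow_sub_one_mul (q m d : ℕ) (hd : d ≤ m) :
    (∏ i ∈ range d, (q ^ (m - i) - 1)) * ∏ i ∈ range (m - d), (q ^ (i + 1) - 1) =
      ∏ i ∈ range m, (q ^ (i + 1) - 1) := by
  obtain ⟨k, rfl⟩ := Nat.exists_eq_add_of_le hd
  rw [Nat.add_sub_cancel_left, add_comm d k, prod_range_add, mul_comm,
    ← prod_range_reflect (fun i => q ^ (k + i + 1) - 1)]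
  refine congrArg _ (prod_congr rfl fun i hi => ?_)
  grind

section Counting

variable {K V : Type*} [DivisionRing K] [AddCommGroup V] [Module K V]

noncomputable def linearIndependentSpanEqEquiv [FiniteDimensional K V] {d : ℕ}
    (U : Submodule K V) (hU : finrank K U = d) :
    {s : {s : Fin d → V // LinearIndependent K s} // span K (Set.range s.1) = U} ≃
      {t : Fin d → U // LinearIndependent K t} where
  toFun s := ⟨fun i => ⟨s.1.1 i, s.2.le (subset_span (Set.mem_range_self i))⟩,
    .of_comp U.subtype s.1.2⟩
  invFun t := ⟨⟨U.subtype ∘ t.1, t.2.map' U.subtype U.ker_subtype⟩, by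
    rw [Set.range_comp, span_image,
      t.2.span_eq_top_of_card_eq_finrank' (by rw [Fintype.card_fin, hU]), map_subtype_top]⟩
  left_inv _ := rfl
  right_inv _ := rfl

variable [Fintype K] [Finite V]

theorem card_linearIndependent_eq_card_subspaces_mul (d : ℕ) :
    Nat.card {s : Fin d → V // LinearIndependent K s} =
      Nat.card {U : Submodule K V // finrank K U = d} *
        ∏ i : Fin d, (Fintype.card K ^ d - Fintype.card K ^ i.val) := by
  have := Fintype.ofFinite {U : Submodule K V // finrank K U = d}
  let spanOf : {s : Fin d → V // LinearIndependent K s} →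
      {U : Submodule K V // finrank K U = d} :=
    fun s => ⟨span K (Set.range s.1), by rw [finrank_span_eq_card s.2, Fintype.card_fin]⟩
  have card_fiber (U : {U : Submodule K V // finrank K U = d}) :
      Nat.card {s // spanOf s = U} =
        ∏ i : Fin d, (Fintype.card K ^ d - Fintype.card K ^ i.val) := by
    rw [Nat.card_congr ((Equiv.subtypeEquivRight fun _ => Subtype.ext_iff).trans
      (linearIndependentSpanEqEquiv U.1 U.2)), card_linearIndependent U.2.ge, U.2]
  rw [← Nat.card_congr (Equiv.sigmaFiberEquiv spanOf), Nat.card_sigma,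
    Finset.sum_congr rfl fun U _ => card_fiber U, sum_const, card_univ, smul_eq_mul,
    Nat.card_eq_fintype_card]

theorem card_subspaces_mul_prod_pow_sub_one {d : ℕ} (hd : d ≤ finrank K V) :
    Nat.card {U : Submodule K V // finrank K U = d} *
        ∏ i ∈ range d, (Fintype.card K ^ (d - i) - 1) =
      ∏ i ∈ range d, (Fintype.card K ^ (finrank K V - i) - 1) := by
  have h := card_linearIndependent (K := K) (V := V) hd
  rw [card_linearIndependent_eq_card_subspaces_mul,
    Fin.prod_univ_eq_prod_range (fun i => Fintype.card K ^ d - Fintype.card K ^ i),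
    Fin.prod_univ_eq_prod_range (fun i => Fintype.card K ^ finrank K V - Fintype.card K ^ i),
    prod_range_pow_sub_pow _ _ _ le_rfl, prod_range_pow_sub_pow _ _ _ hd, mul_left_comm] at h
  exact Nat.eq_of_mul_eq_mul_left (pow_pos Fintype.card_pos _) h

end Counting

open Module in
/-- with `a n = ∏_{i=1}^n (q^i - 1)`, the number of `d`-dimensional subspaces
of `F^m` satisfies `(number) * (a d * a (m-d)) = a m`. -/
theorem card_subspaces_of_dim
    {F : Type} [Field F] [Fintype F] (q : ℕ) (hq : q = Fintype.card F)
    (m d : ℕ) (hd : d ≤ m) :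
    Nat.card {U : Submodule F (Fin m → F) // finrank F U = d} *
        ((∏ i ∈ Finset.range d, (q ^ (i + 1) - 1)) *
          (∏ i ∈ Finset.range (m - d), (q ^ (i + 1) - 1))) =
      ∏ i ∈ Finset.range m, (q ^ (i + 1) - 1) := by
  subst hq
  have h := card_subspaces_mul_prod_pow_sub_one (K := F) (V := Fin m → F) (d := d)
    (by rwa [finrank_fin_fun])
  rw [finrank_fin_fun] at h
  have h_dim : ∏ i ∈ range d, (Fintype.card F ^ (i + 1) - 1) =
      ∏ i ∈ range d, (Fintype.card F ^ (d - i) - 1) := by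
    simpa using (prod_range_pow_sub_one_mul (Fintype.card F) d d le_rfl).symm
  rw [h_dim, ← mul_assoc, h, prod_range_pow_sub_one_mul _ m d hd]
end

section
/- Let p be a prime. The plane (ZMod p)² contains an isotropic vector (i.e. there exists (a,b) ≠ (0,0) in (ZMod p)² with a² + b² = 0) if and only if there exist natural numbers x, y with 1 ≤ x ≤ y and 2y ≤ p such that p divides x² + y². (Consequently, for a 2-dimensional vector space over GF(p), the subspace lattice with orthogonality is orthomodular if and only if p ∤ (x² + y²) for all such pairs (x, y).) -/
/-- `(ZMod p)²` contains an isotropic vector iff there are natural numbers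
`x, y` with `1 ≤ x ≤ y` and `2y ≤ p` such that `p ∣ x² + y²`. -/
theorem isotropic_plane_iff
    {p : ℕ} (hp : p.Prime) :
    (∃ a b : ZMod p, (a, b) ≠ (0, 0) ∧ a ^ 2 + b ^ 2 = 0) ↔
      ∃ x y : ℕ, 1 ≤ x ∧ x ≤ y ∧ 2 * y ≤ p ∧ p ∣ x ^ 2 + y ^ 2 := by
  haveI := Fact.mk hp
  constructor
  · rintro ⟨a, b, hne, hab⟩
    rcases eq_or_ne p 2 with hp2 | hp2
    · subst hp2
      exact ⟨1, 1, le_refl 1, le_refl 1, by norm_num, by norm_num⟩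
    · have hb : b ≠ 0 := by
        rintro rfl
        have ha : a = 0 := by
          have : a ^ 2 = 0 := by simpa using hab
          exact pow_eq_zero_iff (by norm_num) |>.mp this
        simp [ha] at hne
      set i := a * b⁻¹ with hi
      have hi2 : i ^ 2 = -1 := by
        have hb2 : b ^ 2 ≠ 0 := pow_ne_zero _ hb
        have ha2 : a ^ 2 = -(b ^ 2) := by linear_combination hab
        rw [hi, mul_pow, ha2, inv_pow, neg_mul, mul_inv_cancel₀ hb2]
      have hinz : i ≠ 0 := by
        intro h
        have h1 : (1 : ZMod p) = 0 := by
          rw [← neg_neg (1 : ZMod p), ← hi2, h]; simp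
        exact one_ne_zero h1
      have hvpos : 0 < i.val := by
        refine Nat.pos_of_ne_zero fun h => hinz ?_
        simpa [ZMod.val_eq_zero] using h
      have hvlt : i.val < p := ZMod.val_lt i
      set y := min i.val (p - i.val) with hy
      have hy1 : 1 ≤ y := by
        apply le_min hvpos
        omega
      have h2y : 2 * y ≤ p := by
        rcases min_cases i.val (p - i.val) with ⟨h, _⟩ | ⟨h, _⟩ <;> omega
      refine ⟨1, y, le_refl 1, hy1, h2y, ?_⟩
      have hcast : ((y : ZMod p)) ^ 2 = -1 := by
        rcases min_cases i.val (p - i.val) with ⟨h, _⟩ | ⟨h, _⟩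
        · rw [hy, h, ZMod.natCast_val, ZMod.cast_id]; exact hi2
        · rw [hy, h]
          push_cast [Nat.cast_sub hvlt.le]
          rw [ZMod.natCast_self, ZMod.natCast_val, ZMod.cast_id]
          rw [zero_sub, neg_pow, hi2]
          norm_num
      have : ((1 ^ 2 + y ^ 2 : ℕ) : ZMod p) = 0 := by
        push_cast
        rw [hcast]
        ring
      exact (ZMod.natCast_eq_zero_iff _ _).mp this
  · rintro ⟨x, y, hx, hxy, hyp, hdvd⟩
    have hp2 : 2 ≤ p := hp.two_le
    have hxlt : x < p := by omega
    refine ⟨(x : ZMod p), (y : ZMod p), ?_, ?_⟩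
    · intro h
      have hx0 : (x : ZMod p) = 0 := (Prod.mk.injEq _ _ _ _ ▸ h).1
      have := (ZMod.natCast_eq_zero_iff x p).mp hx0
      have := Nat.le_of_dvd (by omega) this
      omega
    · have : ((x ^ 2 + y ^ 2 : ℕ) : ZMod p) = 0 :=
        (ZMod.natCast_eq_zero_iff _ _).mpr hdvd
      push_cast at this
      exact this
end
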